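/- The norms h_n(z) of the monic truncated Hermite polynomials satisfy h_n'(z)·h_{n−1}'(z) = (n·h_{n−1}(z) − 2·h_n(z))² for all n ≥ 1 and z > 0. -/

import Mathlib

/-!
The left side is a product of two instances of the first identity below, the right side the square
of the second. First, `h_n'(z) = 2 P_n(z)² e^{-z²}`: by the extremal property of monic orthogonal
polynomials, `h_n(w) ≤ L_w[P_n(z)²]` for all `w > 0`, with equality at `w = z`, so both
sides have the same derivative at `z`, and the right-hand side, in which the polynomial no longer
moves with `w`, is differentiated by the fundamental theorem of calculus. Second, integrating
`(P_n P_{n-1} e^{-x²})'` over `[-z, z]` and expanding `L[(P_n P_{n-1})' - 2x P_n P_{n-1}]` by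
orthogonality gives `n h_{n-1} - 2 h_n = 2 P_n(z) P_{n-1}(z) e^{-z²}`. In both, the symmetry of the
weight makes `P_n` have the parity of `n`, which evaluates the boundary terms at `-z`.
-/

open Polynomial

/-- The truncated Hermite linear functional `L[p] = ∫_{-z}^{z} p(x) e^{-x²} dx`. -/
noncomputable def truncL (z : ℝ) (p : Polynomial ℝ) : ℝ :=
  ∫ x in (-z)..z, p.eval x * Real.exp (-x ^ 2)

namespace Polynomial.Monic

variable {R : Type*} [Ring R] {f q : R[X]} {n : ℕ}

theorem degree_sub_C_coeff_mul_lt (hf : f.Monic) (hfn : f.natDegree = n) (hq : q.natDegree ≤ n) :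
    (q - C (q.coeff n) * f).degree < n := by
  rw [degree_lt_iff_coeff_zero]
  intro k hk
  rw [coeff_sub, coeff_C_mul]
  rcases hk.eq_or_lt with rfl | hlt
  · rw [← hfn, hf.coeff_natDegree, mul_one, sub_self]
  · have hqk : q.coeff k = 0 := coeff_eq_zero_of_natDegree_lt (hq.trans_lt hlt)
    have hfk : f.coeff k = 0 := coeff_eq_zero_of_natDegree_lt (hfn ▸ hlt)
    rw [hqk, hfk, mul_zero, sub_zero]

end Polynomial.Monic

structure IsMonicOrthogonal {K : Type*} [Field K] (L : K[X] →ₗ[K] K) (p : ℕ → K[X]) :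
    Prop where
  monic : ∀ n, (p n).Monic
  natDegree_eq : ∀ n, (p n).natDegree = n
  orthogonal : ∀ m n, m ≠ n → L (p m * p n) = 0

namespace IsMonicOrthogonal

variable {K : Type*} [Field K] {L : K[X] →ₗ[K] K} {p : ℕ → K[X]} {q : K[X]} {n : ℕ}

theorem coeff_self (hp : IsMonicOrthogonal L p) (n : ℕ) : (p n).coeff n = 1 := by
  simpa [hp.natDegree_eq] using (hp.monic n).coeff_natDegree

theorem apply_mul_eq_zero_of_degree_lt (hp : IsMonicOrthogonal L p) (hq : q.degree < n) :
    L (q * p n) = 0 := by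
  let S : Sequence K :=
    ⟨p, fun i => by rw [degree_eq_natDegree (hp.monic i).ne_zero, hp.natDegree_eq]⟩
  have hspan : Submodule.span K (S '' Set.Iio n) = degreeLT K n :=
    S.span_degreeLT fun i _ => by simp [S, (hp.monic i).leadingCoeff]
  suffices q ∈ LinearMap.ker (L ∘ₗ LinearMap.mulRight K (p n)) by simpa using this
  refine Submodule.span_le.2 ?_ (hspan ▸ mem_degreeLT.2 hq)
  rintro _ ⟨i, hi, rfl⟩
  exact hp.orthogonal i n (ne_of_lt hi)

theorem apply_mul_eq_coeff_mul (hp : IsMonicOrthogonal L p) (hq : q.natDegree ≤ n) :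
    L (q * p n) = q.coeff n * L (p n * p n) := by
  have hlow := hp.apply_mul_eq_zero_of_degree_lt
    ((hp.monic n).degree_sub_C_coeff_mul_lt (hp.natDegree_eq n) hq)
  rwa [sub_mul, map_sub, sub_eq_zero, mul_assoc, ← smul_eq_C_mul, map_smul, smul_eq_mul] at hlow

theorem eq_C_coeff_mul_of_orthogonal (hp : IsMonicOrthogonal L p)
    (hL : ∀ r, L (r * r) = 0 → r = 0) (hq : q.natDegree ≤ n)
    (hqorth : ∀ r : K[X], r.degree < n → L (r * q) = 0) : q = C (q.coeff n) * p n := by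
  set r := q - C (q.coeff n) * p n
  have hr : r.degree < n := (hp.monic n).degree_sub_C_coeff_mul_lt (hp.natDegree_eq n) hq
  have hrr : L (r * r) = 0 := by
    rw [show r * r = r * q - q.coeff n • (r * p n) by simp only [r, smul_eq_C_mul]; ring,
      map_sub, map_smul, hqorth r hr, hp.apply_mul_eq_zero_of_degree_lt hr, smul_zero, sub_zero]
  exact sub_eq_zero.1 (hL r hrr)

theorem apply_mul_self_le [LinearOrder K] [IsStrictOrderedRing K] (hp : IsMonicOrthogonal L p)
    (hL : ∀ r, 0 ≤ L (r * r)) (hq : q.Monic) (hqn : q.natDegree = n) :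
    L (p n * p n) ≤ L (q * q) := by
  have hqp : L (q * p n) = L (p n * p n) := by
    rw [hp.apply_mul_eq_coeff_mul hqn.le, ← hqn, hq.coeff_natDegree, one_mul]
  have hsq : (q - p n) * (q - p n) = q * q - q * p n - q * p n + p n * p n := by ring
  have := hL (q - p n)
  rw [hsq, map_add, map_sub, map_sub, hqp] at this
  linarith

theorem comp_neg_X (hp : IsMonicOrthogonal L p) (hL : ∀ r, L (r * r) = 0 → r = 0)
    (hsymm : ∀ r, L (r.comp (-X)) = L r) (n : ℕ) :
    (p n).comp (-X) = C ((-1) ^ n) * p n := by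
  have hX : (-X : K[X]).natDegree = 1 := by rw [natDegree_neg, natDegree_X]
  have hdeg : ((p n).comp (-X)).natDegree ≤ n := by
    rw [natDegree_comp, hX, mul_one, hp.natDegree_eq]
  have hcoeff : ((p n).comp (-X)).coeff n = (-1) ^ n := by
    have := coeff_comp_degree_mul_degree (p := p n) (q := -X) (by rw [hX]; exact one_ne_zero)
    rwa [hX, mul_one, hp.natDegree_eq, (hp.monic n).leadingCoeff, leadingCoeff_neg,
      leadingCoeff_X, one_mul] at this
  have horth : ∀ r : K[X], r.degree < n → L (r * (p n).comp (-X)) = 0 := by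
    intro r hr
    rw [← comp_neg_X_comp_neg_X r, ← mul_comp_neg_X, hsymm]
    exact hp.apply_mul_eq_zero_of_degree_lt (by rwa [degree_comp_neg_X])
  rw [← hcoeff]
  exact hp.eq_C_coeff_mul_of_orthogonal hL hdeg horth

theorem apply_derivative_sub_two_X_mul (hp : IsMonicOrthogonal L p) (m : ℕ) :
    L (derivative (p (m + 1) * p m) - 2 * X * (p (m + 1) * p m)) =
      (m + 1) * L (p m * p m) - 2 * L (p (m + 1) * p (m + 1)) := by
  have hd₁ : L (derivative (p (m + 1)) * p m) = (m + 1) * L (p m * p m) := by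
    have hle : (derivative (p (m + 1))).natDegree ≤ m := by
      simpa [hp.natDegree_eq] using natDegree_derivative_le (p (m + 1))
    rw [hp.apply_mul_eq_coeff_mul hle, coeff_derivative, hp.coeff_self, one_mul]
  have hd₀ : L (derivative (p m) * p (m + 1)) = 0 := by
    refine hp.apply_mul_eq_zero_of_degree_lt ((degree_derivative_lt (hp.monic m).ne_zero).trans ?_)
    rw [degree_eq_natDegree (hp.monic m).ne_zero, hp.natDegree_eq]
    exact_mod_cast m.lt_succ_self
  have hX : L ((X * p m) * p (m + 1)) = L (p (m + 1) * p (m + 1)) := by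
    have hle : (X * p m).natDegree ≤ m + 1 := by
      rw [natDegree_X_mul (hp.monic m).ne_zero, hp.natDegree_eq]
    rw [hp.apply_mul_eq_coeff_mul hle, coeff_X_mul, hp.coeff_self, one_mul]
  have hsplit : derivative (p (m + 1) * p m) - 2 * X * (p (m + 1) * p m) =
      derivative (p (m + 1)) * p m + derivative (p m) * p (m + 1) -
        (2 : K) • (X * p m * p (m + 1)) := by
    rw [derivative_mul, two_smul]; ring
  rw [hsplit, map_sub, map_add, map_smul, hd₁, hd₀, hX, smul_eq_mul]
  ring

end IsMonicOrthogonal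

open Filter Topology

theorem HasDerivAt.eq_of_eventuallyLE {f g : ℝ → ℝ} {f' g' x : ℝ} (hf : HasDerivAt f f' x)
    (hg : HasDerivAt g g' x) (hle : f ≤ᶠ[𝓝 x] g) (heq : f x = g x) : f' = g' := by
  have hmin : IsLocalMin (g - f) x := by
    filter_upwards [hle] with y hy
    simpa [heq] using hy
  exact (sub_eq_zero.1 (hmin.hasDerivAt_eq_zero (hg.sub hf))).symm

theorem continuous_eval_mul_exp_neg_sq (q : ℝ[X]) :
    Continuous fun x => q.eval x * Real.exp (-x ^ 2) := by
  fun_prop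

noncomputable def truncLₗ (z : ℝ) : ℝ[X] →ₗ[ℝ] ℝ where
  toFun := truncL z
  map_add' p q := by
    simp only [truncL, eval_add, add_mul]
    exact intervalIntegral.integral_add ((continuous_eval_mul_exp_neg_sq p).intervalIntegrable _ _)
      ((continuous_eval_mul_exp_neg_sq q).intervalIntegrable _ _)
  map_smul' c p := by
    simp only [truncL, eval_smul, smul_eq_mul, mul_assoc, intervalIntegral.integral_const_mul,
      RingHom.id_apply]

@[simp]
theorem truncLₗ_apply (z : ℝ) (q : ℝ[X]) : truncLₗ z q = truncL z q := rfl

theorem truncL_mul_self_nonneg {z : ℝ} (hz : 0 ≤ z) (r : ℝ[X]) : 0 ≤ truncL z (r * r) :=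
  intervalIntegral.integral_nonneg (by linarith) fun x _ => by
    rw [eval_mul]; exact mul_nonneg (mul_self_nonneg _) (Real.exp_pos _).le

theorem truncL_mul_self_pos {z : ℝ} (hz : 0 < z) {r : ℝ[X]} (hr : r ≠ 0) :
    0 < truncL z (r * r) := by
  obtain ⟨c, hc, hc_root⟩ :=
    (Set.Icc_infinite (neg_lt_self hz)).exists_notMem_finset r.roots.toFinset
  have hrc : r.eval c ≠ 0 := by simpa [hr] using hc_root
  refine intervalIntegral.integral_pos (neg_lt_self hz)
    (continuous_eval_mul_exp_neg_sq _).continuousOn (fun x _ => ?_) ⟨c, hc, ?_⟩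
  · rw [eval_mul]; exact mul_nonneg (mul_self_nonneg _) (Real.exp_pos _).le
  · rw [eval_mul]; exact mul_pos (mul_self_pos.2 hrc) (Real.exp_pos _)

theorem truncL_comp_neg_X (z : ℝ) (q : ℝ[X]) : truncL z (q.comp (-X)) = truncL z q := by
  have := intervalIntegral.integral_comp_neg (a := -z) (b := z)
    fun x => q.eval x * Real.exp (-x ^ 2)
  simpa only [truncL, eval_comp, eval_neg, eval_X, neg_sq, neg_neg] using this

theorem hasDerivAt_truncL (q : ℝ[X]) (z : ℝ) :
    HasDerivAt (fun z => truncL z q) ((q.eval z + q.eval (-z)) * Real.exp (-z ^ 2)) z := by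
  have hf := continuous_eval_mul_exp_neg_sq q
  have hsplit : (fun z => truncL z q) = fun z =>
      (∫ x in (0 : ℝ)..z, q.eval x * Real.exp (-x ^ 2)) -
        ∫ x in (0 : ℝ)..(-z), q.eval x * Real.exp (-x ^ 2) := by
    funext z
    exact (intervalIntegral.integral_interval_sub_left (hf.intervalIntegrable _ _)
      (hf.intervalIntegrable _ _)).symm
  have h₁ := (hf.integral_hasStrictDerivAt 0 z).hasDerivAt
  have h₂ := (hf.integral_hasStrictDerivAt 0 (-z)).hasDerivAt.comp z (hasDerivAt_neg z)
  rw [hsplit]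
  exact (h₁.sub h₂).congr_deriv (by rw [neg_sq]; ring)

theorem truncL_derivative_sub_two_X_mul (z : ℝ) (q : ℝ[X]) :
    truncL z (derivative q - 2 * X * q) = (q.eval z - q.eval (-z)) * Real.exp (-z ^ 2) := by
  have hderiv : ∀ x, HasDerivAt (fun x => q.eval x * Real.exp (-x ^ 2))
      ((derivative q - 2 * X * q).eval x * Real.exp (-x ^ 2)) x := by
    intro x
    refine ((q.hasDerivAt x).mul (hasDerivAt_pow 2 x).neg.exp).congr_deriv ?_
    simp only [eval_sub, eval_mul, eval_ofNat, eval_X, Pi.neg_apply]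
    ring
  rw [truncL, intervalIntegral.integral_eq_sub_of_hasDerivAt (fun x _ => hderiv x)
    ((continuous_eval_mul_exp_neg_sq _).intervalIntegrable _ _), neg_sq, sub_mul]

namespace IsMonicOrthogonal

variable {z : ℝ} {p : ℕ → ℝ[X]}

theorem eval_neg_of_truncLₗ (hz : 0 < z) (hp : IsMonicOrthogonal (truncLₗ z) p) (n : ℕ)
    (x : ℝ) :
    (p n).eval (-x) = (-1) ^ n * (p n).eval x := by
  have hL (r : ℝ[X]) (hr : truncLₗ z (r * r) = 0) : r = 0 := by
    by_contra h
    exact (truncL_mul_self_pos hz h).ne' hr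
  simpa using congrArg (eval x) (hp.comp_neg_X hL (truncL_comp_neg_X z) n)

theorem succ_mul_truncL_sub_two_mul_truncL (hz : 0 < z) (hp : IsMonicOrthogonal (truncLₗ z) p)
    (m : ℕ) :
    (m + 1) * truncL z (p m * p m) - 2 * truncL z (p (m + 1) * p (m + 1)) =
      2 * (p (m + 1)).eval z * (p m).eval z * Real.exp (-z ^ 2) := by
  have hodd : (-1 : ℝ) ^ (m + 1) * (-1) ^ m = -1 := by
    rw [← pow_add, Odd.neg_one_pow ⟨m, by ring⟩]
  have := hp.apply_derivative_sub_two_X_mul m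
  simp only [truncLₗ_apply] at this
  rw [← this, truncL_derivative_sub_two_X_mul, eval_mul, eval_mul, hp.eval_neg_of_truncLₗ hz,
    hp.eval_neg_of_truncLₗ hz]
  linear_combination (-((p (m + 1)).eval z * (p m).eval z * Real.exp (-z ^ 2))) * hodd

end IsMonicOrthogonal

theorem deriv_truncL_mul_self {P : ℝ → ℕ → ℝ[X]}
    (hP : ∀ z, 0 < z → IsMonicOrthogonal (truncLₗ z) (P z)) {n : ℕ} {z₀ : ℝ} (hz₀ : 0 < z₀)
    (hd : DifferentiableAt ℝ (fun z => truncL z (P z n * P z n)) z₀) :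
    deriv (fun z => truncL z (P z n * P z n)) z₀ =
      2 * (P z₀ n).eval z₀ ^ 2 * Real.exp (-z₀ ^ 2) := by
  set q := P z₀ n * P z₀ n
  have hle : (fun z => truncL z (P z n * P z n)) ≤ᶠ[𝓝 z₀] fun z => truncL z q := by
    filter_upwards [lt_mem_nhds hz₀] with z hz
    exact (hP z hz).apply_mul_self_le (truncL_mul_self_nonneg hz.le) ((hP z₀ hz₀).monic n)
      ((hP z₀ hz₀).natDegree_eq n)
  have heven : (-1 : ℝ) ^ n * (-1) ^ n = 1 := by
    rw [← mul_pow, neg_one_mul, neg_neg, one_pow]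
  rw [hd.hasDerivAt.eq_of_eventuallyLE (hasDerivAt_truncL q z₀) hle rfl, eval_mul, eval_mul,
    (hP z₀ hz₀).eval_neg_of_truncLₗ hz₀]
  linear_combination ((P z₀ n).eval z₀ ^ 2 * Real.exp (-z₀ ^ 2)) * heven

theorem truncated_hermite_h_deriv_product_general (P : ℝ → ℕ → Polynomial ℝ) (h : ℕ → ℝ → ℝ)
    (hmonic : ∀ z n, (P z n).Monic) (hdeg : ∀ z n, (P z n).natDegree = n)
    (horth : ∀ z, 0 < z → ∀ m n, m ≠ n → truncL z (P z m * P z n) = 0)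
    (hh : ∀ n z, h n z = truncL z (P z n * P z n))
    (hdiff : ∀ n z, 0 < z → DifferentiableAt ℝ (h n) z) :
    ∀ n : ℕ, 1 ≤ n → ∀ z : ℝ, 0 < z →
      deriv (h n) z * deriv (h (n - 1)) z = ((n : ℝ) * h (n - 1) z - 2 * h n z) ^ 2 := by
  intro n hn z hz
  have hP (z : ℝ) (hz : 0 < z) : IsMonicOrthogonal (truncLₗ z) (P z) :=
    ⟨hmonic z, hdeg z, horth z hz⟩
  obtain rfl : h = fun n z => truncL z (P z n * P z n) := funext fun n => funext (hh n)
  obtain ⟨m, rfl⟩ := Nat.exists_eq_add_of_le' hn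
  rw [Nat.add_sub_cancel, deriv_truncL_mul_self hP hz (hdiff _ z hz),
    deriv_truncL_mul_self hP hz (hdiff _ z hz), Nat.cast_add_one,
    (hP z hz).succ_mul_truncL_sub_two_mul_truncL hz m]
  ring

theorem truncated_hermite_h_deriv_product (P : ℝ → ℕ → Polynomial ℝ) (γ h : ℕ → ℝ → ℝ)
    (hmonic : ∀ z n, (P z n).Monic) (hdeg : ∀ z n, (P z n).natDegree = n)
    (horth : ∀ z, 0 < z → ∀ m n, m ≠ n → truncL z (P z m * P z n) = 0)
    (hP0 : ∀ z, P z 0 = 1) (hP1 : ∀ z, P z 1 = X)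
    (hrec : ∀ z, 0 < z → ∀ n, X * P z (n + 1) = P z (n + 2) + C (γ (n + 1) z) * P z n)
    (hh : ∀ n z, h n z = truncL z (P z n * P z n))
    (hdiff : ∀ n z, 0 < z → DifferentiableAt ℝ (h n) z) :
    ∀ n : ℕ, 1 ≤ n → ∀ z : ℝ, 0 < z →
      deriv (h n) z * deriv (h (n - 1)) z = ((n : ℝ) * h (n - 1) z - 2 * h n z) ^ 2 :=
  truncated_hermite_h_deriv_product_general P h hmonic hdeg horth hh hdiff
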